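/- For every admissible curve γ, the Wigner caustic WC(γ) is an admissible curve of constant width zero, i.e., [WC(γ)(t+T),v(t+T)] + [WC(γ)(t),v(t)] = 0 for all t (in particular L_*(WC(γ)) = 0). -/

import Mathlib

open MeasureTheory Set

noncomputable section

/-- `det2 a b` is the determinant of the 2×2 matrix with columns `a, b ∈ ℝ²`. -/
def det2 (a b : ℝ × ℝ) : ℝ := a.1 * b.2 - a.2 * b.1

/-- A smooth-by-parts parameterization `u` of the boundary of the unit ball `U` of a
normed plane: `u` is `2T`-periodic with `u(t+T) = -u(t)`, positively oriented, smooth on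
each piece of a partition `pts 0 = 0 < pts 1 < ⋯ < pts (2n) = 2T` (with the pieces on
`[T,2T]` the translates of those on `[0,T]`), with one-sided derivative `du` and second
derivative `ddu` on each piece, `du ≠ 0` on each piece, and each piece either a strictly
convex arc (`det2 (du t) (ddu t) ≠ 0`) or a straight segment (`det2 (du t) (ddu t) = 0`). -/
structure SBPBall where
  T : ℝ
  hT : 0 < T
  u : ℝ → ℝ × ℝ
  du : ℝ → ℝ × ℝ
  ddu : ℝ → ℝ × ℝ
  n : ℕ
  hn : 0 < n
  pts : ℕ → ℝ
  pts_zero : pts 0 = 0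
  pts_last : pts (2 * n) = 2 * T
  pts_mono : StrictMonoOn pts (Set.Iic (2 * n))
  pts_half : ∀ i ≤ n, pts (i + n) = pts i + T
  cont : Continuous u
  per : Function.Periodic u (2 * T)
  du_per : Function.Periodic du (2 * T)
  antipodal : ∀ t, u (t + T) = -u t
  hderiv : ∀ i < 2 * n, ∀ t ∈ Set.Ico (pts i) (pts (i + 1)),
    HasDerivWithinAt u (du t) (Set.Icc (pts i) (pts (i + 1))) t
  hderiv2 : ∀ i < 2 * n, ∀ t ∈ Set.Ico (pts i) (pts (i + 1)),
    HasDerivWithinAt du (ddu t) (Set.Icc (pts i) (pts (i + 1))) t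
  smooth : ∀ i < 2 * n, ContDiffOn ℝ (⊤ : ℕ∞) u (Set.Ioo (pts i) (pts (i + 1)))
  du_ne : ∀ i < 2 * n, ∀ t ∈ Set.Ico (pts i) (pts (i + 1)), du t ≠ 0
  pieces : ∀ i < 2 * n,
    (∀ t ∈ Set.Ico (pts i) (pts (i + 1)), det2 (du t) (ddu t) ≠ 0) ∨
    (∀ t ∈ Set.Ico (pts i) (pts (i + 1)), det2 (du t) (ddu t) = 0)
  pos : ∀ i < 2 * n, ∀ t ∈ Set.Ico (pts i) (pts (i + 1)), 0 < det2 (u t) (du t)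
  isBall : ∃ Uset : Set (ℝ × ℝ), Convex ℝ Uset ∧ IsCompact Uset ∧
    (0 : ℝ × ℝ) ∈ interior Uset ∧ Set.range u = frontier Uset

/-- An admissible curve for the unit ball `B`: a closed (`2T`-periodic) piecewise-smooth
curve `γ` whose one-sided derivative on each piece satisfies `γ'(t) = r(t) • u'(t)`,
where `r` is the curvature radius of `γ`. -/
structure AdmissibleCurve (B : SBPBall) where
  γ : ℝ → ℝ × ℝ
  dγ : ℝ → ℝ × ℝ
  r : ℝ → ℝ
  cont : Continuous γ
  per : Function.Periodic γ (2 * B.T)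
  dγ_per : Function.Periodic dγ (2 * B.T)
  r_per : Function.Periodic r (2 * B.T)
  hderiv : ∀ i < 2 * B.n, ∀ t ∈ Set.Ico (B.pts i) (B.pts (i + 1)),
    HasDerivWithinAt γ (dγ t) (Set.Icc (B.pts i) (B.pts (i + 1))) t
  smooth : ∀ i < 2 * B.n, ContDiffOn ℝ (⊤ : ℕ∞) γ (Set.Ioo (B.pts i) (B.pts (i + 1)))
  adm : ∀ i < 2 * B.n, ∀ t ∈ Set.Ico (B.pts i) (B.pts (i + 1)), dγ t = r t • B.du t

/-- The dual circle parameterization `v(t) = u'(t) / [u(t), u'(t)]`. -/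
def SBPBall.v (B : SBPBall) (t : ℝ) : ℝ × ℝ := (det2 (B.u t) (B.du t))⁻¹ • B.du t

/-- The area `A(u)` of the unit ball `U`, `A(u) = (1/2)∫₀^{2T} [u(t), u'(t)] dt`. -/
def SBPBall.area (B : SBPBall) : ℝ :=
  (1 / 2) * ∫ t in (0 : ℝ)..(2 * B.T), det2 (B.u t) (B.du t)

/-- The (signed) dual length `L_*(γ) = ∫₀^{2T} r(t)·[u(t), u'(t)] dt`. -/
def dualLength (B : SBPBall) (g : AdmissibleCurve B) : ℝ :=
  ∫ t in (0 : ℝ)..(2 * B.T), g.r t * det2 (B.u t) (B.du t)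

/-- The mixed area `A(γ₁, γ₂) = (1/2)∫₀^{2T} [γ₁(t), γ₂'(t)] dt`. -/
def mixedArea (B : SBPBall) (g₁ g₂ : AdmissibleCurve B) : ℝ :=
  (1 / 2) * ∫ t in (0 : ℝ)..(2 * B.T), det2 (g₁.γ t) (g₂.dγ t)

/-- The signed area `A(γ) = A(γ, γ) = (1/2)∫₀^{2T} [γ(t), γ'(t)] dt`. -/
def signedArea (B : SBPBall) (g : AdmissibleCurve B) : ℝ :=
  (1 / 2) * ∫ t in (0 : ℝ)..(2 * B.T), det2 (g.γ t) (g.dγ t)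

/-- The mean width `w_γ = L_*(γ) / A(u)`. -/
def meanWidth (B : SBPBall) (g : AdmissibleCurve B) : ℝ := dualLength B g / B.area

/-- A closed curve is convex when its image is the frontier of a compact convex set. -/
def IsConvexCurve (c : ℝ → ℝ × ℝ) : Prop :=
  ∃ K : Set (ℝ × ℝ), Convex ℝ K ∧ IsCompact K ∧ Set.range c = frontier K

/-- A curve has constant width when `[c(t+T), v(t+T)] + [c(t), v(t)]` is constant in `t`. -/
def HasConstantWidth (B : SBPBall) (c : ℝ → ℝ × ℝ) : Prop :=
  ∃ w : ℝ, ∀ t, det2 (c (t + B.T)) (B.v (t + B.T)) + det2 (c t) (B.v t) = w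

/-- The Wigner caustic `WC(γ)(t) = (1/2)(γ(t) + γ(t+T))`. -/
def wcFun (B : SBPBall) (g : AdmissibleCurve B) (t : ℝ) : ℝ × ℝ :=
  (1 / 2 : ℝ) • (g.γ t + g.γ (t + B.T))

/-- The derivative of the Wigner caustic. -/
def wcDer (B : SBPBall) (g : AdmissibleCurve B) (t : ℝ) : ℝ × ℝ :=
  (1 / 2 : ℝ) • (g.dγ t + g.dγ (t + B.T))

/-- The signed area of the Wigner caustic of `γ`. -/
def areaWC (B : SBPBall) (g : AdmissibleCurve B) : ℝ :=
  (1 / 2) * ∫ t in (0 : ℝ)..(2 * B.T), det2 (wcFun B g t) (wcDer B g t)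

/-- The constant width measure set `CWMS(γ)(t) = (1/2)(γ(t) - γ(t+T) - w_γ·u(t))`. -/
def cwmsFun (B : SBPBall) (g : AdmissibleCurve B) (t : ℝ) : ℝ × ℝ :=
  (1 / 2 : ℝ) • (g.γ t - g.γ (t + B.T) - meanWidth B g • B.u t)

/-- The derivative of the constant width measure set. -/
def cwmsDer (B : SBPBall) (g : AdmissibleCurve B) (t : ℝ) : ℝ × ℝ :=
  (1 / 2 : ℝ) • (g.dγ t - g.dγ (t + B.T) - meanWidth B g • B.du t)

/-- The signed area of the constant width measure set of `γ`. -/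
def areaCWMS (B : SBPBall) (g : AdmissibleCurve B) : ℝ :=
  (1 / 2) * ∫ t in (0 : ℝ)..(2 * B.T), det2 (cwmsFun B g t) (cwmsDer B g t)


section Helpers

variable (B : SBPBall)

lemma det2_neg_neg (a b : ℝ × ℝ) : det2 (-a) (-b) = det2 a b := by
  simp only [det2, Prod.fst_neg, Prod.snd_neg]; ring

lemma det2_neg_right (a b : ℝ × ℝ) : det2 a (-b) = -det2 a b := by
  simp only [det2, Prod.fst_neg, Prod.snd_neg]; ring

lemma SBPBall.pts_lt {i : ℕ} (hi : i < 2 * B.n) : B.pts i < B.pts (i + 1) :=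
  B.pts_mono (Set.mem_Iic.2 (by omega)) (Set.mem_Iic.2 hi) (by omega)

lemma SBPBall.exists_piece {t : ℝ} (h0 : 0 ≤ t) (h1 : t < 2 * B.T) :
    ∃ i < 2 * B.n, t ∈ Set.Ico (B.pts i) (B.pts (i + 1)) := by
  classical
  have hN1 : 1 ≤ 2 * B.n := by have := B.hn; omega
  set P : ℕ → Prop := fun j => B.pts j ≤ t with hP
  have hP0 : P 0 := by simp only [hP, B.pts_zero]; exact h0
  set i := Nat.findGreatest P (2 * B.n - 1) with hi
  have hiN : i ≤ 2 * B.n - 1 := Nat.findGreatest_le _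
  have hPi : P i := Nat.findGreatest_spec (Nat.zero_le _) hP0
  refine ⟨i, by omega, hPi, ?_⟩
  by_cases hc : i + 1 ≤ 2 * B.n - 1
  · exact lt_of_not_ge (Nat.findGreatest_is_greatest (Nat.lt_succ_self i) hc)
  · have hieq : i + 1 = 2 * B.n := by omega
    rw [hieq, B.pts_last]; exact h1

lemma SBPBall.pts_n : B.pts B.n = B.T := by
  have := B.pts_half 0 (Nat.zero_le _)
  simpa [B.pts_zero] using this

lemma SBPBall.exists_piece_half {t : ℝ} (h0 : 0 ≤ t) (h1 : t < B.T) :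
    ∃ i < B.n, t ∈ Set.Ico (B.pts i) (B.pts (i + 1)) := by
  obtain ⟨i, hi, hmem⟩ := B.exists_piece h0 (by have := B.hT; nlinarith)
  refine ⟨i, ?_, hmem⟩
  by_contra h
  have hni : B.n ≤ i := by omega
  have : B.pts B.n ≤ B.pts i :=
    B.pts_mono.monotoneOn (Set.mem_Iic.2 (by omega)) (Set.mem_Iic.2 (by omega)) hni
  have := hmem.1
  rw [B.pts_n] at *
  linarith

/-- On the first half, `du (t + T) = - du t`, by uniqueness of one-sided derivatives. -/
lemma SBPBall.du_anti_core {t : ℝ} (h0 : 0 ≤ t) (h1 : t < B.T) :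
    B.du (t + B.T) = -B.du t := by
  obtain ⟨i, hi, hmem⟩ := B.exists_piece_half h0 h1
  have hi2 : i < 2 * B.n := by omega
  have h1' : HasDerivWithinAt B.u (B.du t)
      (Set.Icc (B.pts i) (B.pts (i + 1))) t := B.hderiv i hi2 t hmem
  have hpi : B.pts (i + B.n) = B.pts i + B.T := B.pts_half i (le_of_lt hi)
  have hpi1 : B.pts (i + B.n + 1) = B.pts (i + 1) + B.T := by
    have : i + B.n + 1 = (i + 1) + B.n := by omega
    rw [this, B.pts_half (i + 1) hi]
  have hmem' : t + B.T ∈ Set.Ico (B.pts (i + B.n)) (B.pts (i + B.n + 1)) := by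
    rw [hpi, hpi1]
    exact ⟨by linarith [hmem.1], by linarith [hmem.2]⟩
  have h2 : HasDerivWithinAt B.u (B.du (t + B.T))
      (Set.Icc (B.pts (i + B.n)) (B.pts (i + B.n + 1))) (t + B.T) :=
    B.hderiv (i + B.n) (by omega) (t + B.T) hmem'
  rw [hpi, hpi1] at h2
  have hh : HasDerivWithinAt (fun s : ℝ => s + B.T) 1
      (Set.Icc (B.pts i) (B.pts (i + 1))) t :=
    (hasDerivWithinAt_id t _).add_const B.T
  have hmap : Set.MapsTo (fun s : ℝ => s + B.T) (Set.Icc (B.pts i) (B.pts (i + 1)))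
      (Set.Icc (B.pts i + B.T) (B.pts (i + 1) + B.T)) := by
    intro x hx
    simp only [Set.mem_Icc] at hx ⊢
    constructor <;> linarith [hx.1, hx.2]
  have h3 := h2.scomp_of_eq t hh hmap rfl
  simp only [one_smul] at h3
  have h4 : HasDerivWithinAt (fun s => -B.u s) (B.du (t + B.T))
      (Set.Icc (B.pts i) (B.pts (i + 1))) t := by
    have : (B.u ∘ fun s : ℝ => s + B.T) = fun s => -B.u s := by
      funext s; exact B.antipodal s
    rwa [this] at h3
  have h5 : HasDerivWithinAt B.u (-B.du (t + B.T))
      (Set.Icc (B.pts i) (B.pts (i + 1))) t := by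
    have := h4.neg
    have hf : (-fun s => -B.u s) = B.u := by funext s; simp
    rw [hf] at this; exact this
  have hu : UniqueDiffWithinAt ℝ (Set.Icc (B.pts i) (B.pts (i + 1))) t :=
    (uniqueDiffOn_Icc (B.pts_lt hi2)) t (Set.Ico_subset_Icc_self hmem)
  have heq : B.du t = -B.du (t + B.T) := hu.eq_deriv _ h1' h5
  rw [heq]; simp

lemma SBPBall.du_anti (t : ℝ) : B.du (t + B.T) = -B.du t := by
  have hcore : ∀ s ∈ Set.Ico (0 : ℝ) (2 * B.T), B.du (s + B.T) + B.du s = 0 := by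
    intro s hs
    by_cases hsT : s < B.T
    · rw [B.du_anti_core hs.1 hsT]; ring
    · push_neg at hsT
      have h0' : 0 ≤ s - B.T := by linarith
      have h1' : s - B.T < B.T := by linarith [hs.2]
      have hA := B.du_anti_core h0' h1'
      have e1 : s - B.T + B.T = s := by ring
      rw [e1] at hA
      have e2 : s + B.T = (s - B.T) + 2 * B.T := by ring
      rw [e2, B.du_per (s - B.T), hA]
      ring
  have hper : Function.Periodic (fun s => B.du (s + B.T) + B.du s) (2 * B.T) := by
    intro x
    have e : x + 2 * B.T + B.T = (x + B.T) + 2 * B.T := by ring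
    simp only [e, B.du_per (x + B.T), B.du_per x]
  obtain ⟨y, hy, hty⟩ := hper.exists_mem_Ico₀ (by linarith [B.hT]) t
  have : B.du (t + B.T) + B.du t = 0 := by rw [hty]; exact hcore y hy
  exact eq_neg_of_add_eq_zero_left this

end Helpers


section Helpers2

variable (B : SBPBall) (g : AdmissibleCurve B)

lemma AdmissibleCurve.adm_global (t : ℝ) : g.dγ t = g.r t • B.du t := by
  have hper : Function.Periodic (fun s => g.dγ s - g.r s • B.du s) (2 * B.T) := by
    intro x
    simp only [g.dγ_per x, g.r_per x, B.du_per x]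
  obtain ⟨y, hy, hty⟩ := hper.exists_mem_Ico₀ (by linarith [B.hT]) t
  obtain ⟨i, hi, hmem⟩ := B.exists_piece hy.1 hy.2
  have h0 : g.dγ y - g.r y • B.du y = 0 := by
    rw [g.adm i hi y hmem]; simp
  have : g.dγ t - g.r t • B.du t = 0 := by rw [hty]; exact h0
  exact sub_eq_zero.mp this

lemma AdmissibleCurve.hderiv_shift :
    ∀ i < 2 * B.n, ∀ t ∈ Set.Ico (B.pts i) (B.pts (i + 1)),
      HasDerivWithinAt (fun s => g.γ (s + B.T)) (g.dγ (t + B.T))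
        (Set.Icc (B.pts i) (B.pts (i + 1))) t := by
  intro i hi t hmem
  by_cases hin : i < B.n
  · have hpi : B.pts (i + B.n) = B.pts i + B.T := B.pts_half i (le_of_lt hin)
    have hpi1 : B.pts (i + B.n + 1) = B.pts (i + 1) + B.T := by
      have : i + B.n + 1 = (i + 1) + B.n := by omega
      rw [this, B.pts_half (i + 1) hin]
    have hmem' : t + B.T ∈ Set.Ico (B.pts (i + B.n)) (B.pts (i + B.n + 1)) := by
      rw [hpi, hpi1]
      exact ⟨by linarith [hmem.1], by linarith [hmem.2]⟩
    have h2 := g.hderiv (i + B.n) (by omega) (t + B.T) hmem'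
    rw [hpi, hpi1] at h2
    have hh : HasDerivWithinAt (fun s : ℝ => s + B.T) 1
        (Set.Icc (B.pts i) (B.pts (i + 1))) t :=
      (hasDerivWithinAt_id t _).add_const B.T
    have hmap : Set.MapsTo (fun s : ℝ => s + B.T) (Set.Icc (B.pts i) (B.pts (i + 1)))
        (Set.Icc (B.pts i + B.T) (B.pts (i + 1) + B.T)) := by
      intro x hx
      simp only [Set.mem_Icc] at hx ⊢
      constructor <;> linarith [hx.1, hx.2]
    have h3 := h2.scomp_of_eq t hh hmap rfl
    simp only [one_smul] at h3; exact h3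
  · push_neg at hin
    set j := i - B.n with hj
    have hjn : j < B.n := by omega
    have hij : j + B.n = i := by omega
    have hpi : B.pts i = B.pts j + B.T := by rw [← hij]; exact B.pts_half j (le_of_lt hjn)
    have hpi1 : B.pts (i + 1) = B.pts (j + 1) + B.T := by
      have : i + 1 = (j + 1) + B.n := by omega
      rw [this, B.pts_half (j + 1) hjn]
    have hmem' : t - B.T ∈ Set.Ico (B.pts j) (B.pts (j + 1)) := by
      constructor
      · have := hmem.1; rw [hpi] at this; linarith
      · have := hmem.2; rw [hpi1] at this; linarith
    have h2 := g.hderiv j (by omega) (t - B.T) hmem'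
    have hh : HasDerivWithinAt (fun s : ℝ => s - B.T) 1
        (Set.Icc (B.pts i) (B.pts (i + 1))) t := by
      simpa using (hasDerivWithinAt_id t (Set.Icc (B.pts i) (B.pts (i + 1)))).sub_const B.T
    have hmap : Set.MapsTo (fun s : ℝ => s - B.T) (Set.Icc (B.pts i) (B.pts (i + 1)))
        (Set.Icc (B.pts j) (B.pts (j + 1))) := by
      intro x hx
      simp only [Set.mem_Icc] at hx ⊢
      rw [hpi] at hx; rw [hpi1] at hx
      constructor <;> linarith [hx.1, hx.2]
    have h3 := h2.scomp_of_eq t hh hmap rfl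
    simp only [one_smul] at h3
    have hfun : (g.γ ∘ fun s : ℝ => s - B.T) = fun s => g.γ (s + B.T) := by
      funext s
      have e : s + B.T = (s - B.T) + 2 * B.T := by ring
      simp only [Function.comp_apply, e, g.per (s - B.T)]
    have hval : g.dγ (t - B.T) = g.dγ (t + B.T) := by
      have e : t + B.T = (t - B.T) + 2 * B.T := by ring
      rw [e, g.dγ_per (t - B.T)]
    rw [hfun, hval] at h3
    exact h3

lemma AdmissibleCurve.smooth_shift :
    ∀ i < 2 * B.n, ContDiffOn ℝ (⊤ : ℕ∞) (fun s => g.γ (s + B.T))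
      (Set.Ioo (B.pts i) (B.pts (i + 1))) := by
  intro i hi
  by_cases hin : i < B.n
  · have hpi : B.pts (i + B.n) = B.pts i + B.T := B.pts_half i (le_of_lt hin)
    have hpi1 : B.pts (i + B.n + 1) = B.pts (i + 1) + B.T := by
      have : i + B.n + 1 = (i + 1) + B.n := by omega
      rw [this, B.pts_half (i + 1) hin]
    have hs := g.smooth (i + B.n) (by omega)
    rw [hpi, hpi1] at hs
    have hf : ContDiffOn ℝ (⊤ : ℕ∞) (fun s : ℝ => s + B.T)
        (Set.Ioo (B.pts i) (B.pts (i + 1))) :=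
      (contDiff_id.add contDiff_const).contDiffOn
    refine hs.comp hf ?_
    intro x hx
    simp only [Set.mem_Ioo] at hx ⊢
    constructor <;> linarith [hx.1, hx.2]
  · push_neg at hin
    set j := i - B.n with hj
    have hjn : j < B.n := by omega
    have hij : j + B.n = i := by omega
    have hpi : B.pts i = B.pts j + B.T := by rw [← hij]; exact B.pts_half j (le_of_lt hjn)
    have hpi1 : B.pts (i + 1) = B.pts (j + 1) + B.T := by
      have : i + 1 = (j + 1) + B.n := by omega
      rw [this, B.pts_half (j + 1) hjn]
    have hs := g.smooth j (by omega)
    have hf : ContDiffOn ℝ (⊤ : ℕ∞) (fun s : ℝ => s - B.T)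
        (Set.Ioo (B.pts i) (B.pts (i + 1))) :=
      (contDiff_id.sub contDiff_const).contDiffOn
    have hcomp := hs.comp hf (by
      intro x hx
      simp only [Set.mem_Ioo] at hx ⊢
      rw [hpi] at hx; rw [hpi1] at hx
      constructor <;> linarith [hx.1, hx.2])
    have hfun : (g.γ ∘ fun s : ℝ => s - B.T) = fun s => g.γ (s + B.T) := by
      funext s
      have e : s + B.T = (s - B.T) + 2 * B.T := by ring
      simp only [Function.comp_apply, e, g.per (s - B.T)]
    rwa [hfun] at hcomp

end Helpers2

/-- for every admissible curve `γ`, the Wigner caustic `WC(γ)` is an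
admissible curve of constant width zero, i.e.
`[WC(γ)(t+T),v(t+T)] + [WC(γ)(t),v(t)] = 0` for all `t`; in particular `L_*(WC(γ)) = 0`. -/
theorem stmt_8 (B : SBPBall) (g : AdmissibleCurve B) :
    ∃ w : AdmissibleCurve B,
      (∀ t, w.γ t = wcFun B g t) ∧
      (∀ t, det2 (w.γ (t + B.T)) (B.v (t + B.T)) + det2 (w.γ t) (B.v t) = 0) ∧
      dualLength B w = 0 := by
  have hdu : ∀ t, B.du (t + B.T) = -B.du t := B.du_anti
  have hadm : ∀ t, g.dγ t = g.r t • B.du t := AdmissibleCurve.adm_global B g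
  refine ⟨{ γ := wcFun B g
            dγ := wcDer B g
            r := fun t => (g.r t - g.r (t + B.T)) / 2
            cont := ?_
            per := ?_
            dγ_per := ?_
            r_per := ?_
            hderiv := ?_
            smooth := ?_
            adm := ?_ }, ?_, ?_, ?_⟩
  · -- continuity
    show Continuous fun t => (1 / 2 : ℝ) • (g.γ t + g.γ (t + B.T))
    exact (g.cont.add (g.cont.comp (continuous_id.add continuous_const))).const_smul (1 / 2 : ℝ)
  · -- periodicity of wcFun
    intro x
    simp only [wcFun]
    have e : x + 2 * B.T + B.T = (x + B.T) + 2 * B.T := by ring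
    rw [g.per x, e, g.per (x + B.T)]
  · -- periodicity of wcDer
    intro x
    simp only [wcDer]
    have e : x + 2 * B.T + B.T = (x + B.T) + 2 * B.T := by ring
    rw [g.dγ_per x, e, g.dγ_per (x + B.T)]
  · -- periodicity of r
    intro x
    have e : x + 2 * B.T + B.T = (x + B.T) + 2 * B.T := by ring
    simp only [g.r_per x, e, g.r_per (x + B.T)]
  · -- hderiv
    intro i hi t ht
    have h1 := g.hderiv i hi t ht
    have h2 := AdmissibleCurve.hderiv_shift B g i hi t ht
    exact (h1.add h2).const_smul (1 / 2 : ℝ)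
  · -- smooth
    intro i hi
    exact ((g.smooth i hi).add (AdmissibleCurve.smooth_shift B g i hi)).const_smul _
  · -- adm
    intro i hi t ht
    show wcDer B g t = ((g.r t - g.r (t + B.T)) / 2) • B.du t
    simp only [wcDer, hadm t, hadm (t + B.T), hdu t]
    rw [smul_neg, ← sub_eq_add_neg, ← sub_smul, smul_smul]
    congr 1
    ring
  · -- w.γ = wcFun
    intro t; rfl
  · -- constant width zero
    intro t
    show det2 (wcFun B g (t + B.T)) (B.v (t + B.T)) + det2 (wcFun B g t) (B.v t) = 0
    have hwc : wcFun B g (t + B.T) = wcFun B g t := by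
      simp only [wcFun]
      have e : t + B.T + B.T = t + 2 * B.T := by ring
      rw [e, g.per t, add_comm]
    have hv : B.v (t + B.T) = -B.v t := by
      simp only [SBPBall.v, B.antipodal t, hdu t, det2_neg_neg, smul_neg]
    rw [hwc, hv, det2_neg_right]
    ring
  · -- dual length zero
    show (∫ t in (0 : ℝ)..(2 * B.T),
        ((g.r t - g.r (t + B.T)) / 2) * det2 (B.u t) (B.du t)) = 0
    set H : ℝ → ℝ := fun t => ((g.r t - g.r (t + B.T)) / 2) * det2 (B.u t) (B.du t) with hH
    have hanti : ∀ t, H (t + B.T) = -H t := by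
      intro t
      have hr : g.r (t + B.T + B.T) = g.r t := by
        have e : t + B.T + B.T = t + 2 * B.T := by ring
        rw [e, g.r_per t]
      have hD : det2 (B.u (t + B.T)) (B.du (t + B.T)) = det2 (B.u t) (B.du t) := by
        rw [B.antipodal t, hdu t, det2_neg_neg]
      simp only [hH, hr, hD]
      ring
    by_cases hI : IntervalIntegrable H MeasureTheory.volume 0 (2 * B.T)
    · have hT : 0 < B.T := B.hT
      have h0T : IntervalIntegrable H MeasureTheory.volume 0 B.T := by
        refine hI.mono_set ?_
        rw [Set.uIcc_of_le (by linarith), Set.uIcc_of_le (by linarith)]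
        exact Set.Icc_subset_Icc le_rfl (by linarith)
      have hT2T : IntervalIntegrable H MeasureTheory.volume B.T (2 * B.T) := by
        refine hI.mono_set ?_
        rw [Set.uIcc_of_le (by linarith), Set.uIcc_of_le (by linarith)]
        exact Set.Icc_subset_Icc (by linarith) le_rfl
      have hsplit := intervalIntegral.integral_add_adjacent_intervals h0T hT2T
      have hshift : (∫ t in (0 : ℝ)..B.T, H (t + B.T)) = ∫ t in B.T..(2 * B.T), H t := by
        rw [intervalIntegral.integral_comp_add_right, zero_add, two_mul]
      have hneg : (∫ t in (0 : ℝ)..B.T, H (t + B.T)) = -∫ t in (0 : ℝ)..B.T, H t := by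
        simp only [hanti]
        exact intervalIntegral.integral_neg
      calc (∫ t in (0 : ℝ)..(2 * B.T), H t)
          = (∫ t in (0 : ℝ)..B.T, H t) + ∫ t in B.T..(2 * B.T), H t := hsplit.symm
        _ = (∫ t in (0 : ℝ)..B.T, H t) + ∫ t in (0 : ℝ)..B.T, H (t + B.T) := by
            rw [hshift]
        _ = 0 := by rw [hneg]; ring
    · exact intervalIntegral.integral_undef hI
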